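/- arXiv:1510.05334 — 2 statements merged into one kernel-verified Lean document; each statement's English description precedes it below -/
import Mathlib

section
/- If f: F^n → F is a degree-d polynomial and H ⊆ F^n is a hyperplane (affine subspace of dimension n - 1), then strong-rank(f) ≤ strong-rank(f|_H) + 1. -/
/-!
Complete the parametrization `u ↦ c + M u` of the hyperplane to an invertible affine change of
coordinates `x ↦ c + A x`; it preserves total degree and strong rank and turns the hyperplane into
`{x₀ = 0}`. There `f = f(0, x') + x₀ · R` with `deg R ≤ d - 1`, so a decomposition of the
restriction `f(0, x')` plus the one product `x₀ · R` (absorbed into the low-degree part when `R`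
is constant) decomposes `f`.
-/

open Finset MvPolynomial

/-- `P` has a strong decomposition with `r` terms with respect to degree `d`. -/
def HasStrongDecomp {q n : ℕ} (d r : ℕ) (P : MvPolynomial (Fin n) (ZMod q)) : Prop :=
  ∃ (G H : Fin r → MvPolynomial (Fin n) (ZMod q)) (Q : MvPolynomial (Fin n) (ZMod q)),
    (∀ i, 0 < (G i).totalDegree) ∧ (∀ i, 0 < (H i).totalDegree) ∧
    (∀ i, (G i).totalDegree + (H i).totalDegree ≤ d) ∧
    Q.totalDegree ≤ d - 1 ∧
    P = ∑ i, G i * H i + Q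

/-- The strong rank of a polynomial with respect to degree `d`. -/
noncomputable def strongRankD {q n : ℕ} (d : ℕ) (P : MvPolynomial (Fin n) (ZMod q)) : ℕ :=
  sInf {r | HasStrongDecomp d r P}

open Matrix

theorem totalDegree_aeval_le {R σ τ : Type*} [CommSemiring R] {g : σ → MvPolynomial τ R}
    (hg : ∀ i, (g i).totalDegree ≤ 1) (P : MvPolynomial σ R) :
    (aeval g P).totalDegree ≤ P.totalDegree := by
  nth_rw 1 [P.as_sum]
  rw [map_sum]
  refine totalDegree_finsetSum_le fun α hα => ?_
  rw [aeval_monomial, algebraMap_eq, Finsupp.prod]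
  have hprod : (∏ i ∈ α.support, g i ^ α i).totalDegree ≤ ∑ i ∈ α.support, α i :=
    (totalDegree_finsetProd _ _).trans <| Finset.sum_le_sum fun i _ =>
      (totalDegree_pow _ _).trans (by simpa using Nat.mul_le_mul_left (α i) (hg i))
  calc _ ≤ (C (P.coeff α)).totalDegree + (∏ i ∈ α.support, g i ^ α i).totalDegree :=
        totalDegree_mul _ _
    _ ≤ P.totalDegree := by
        rw [totalDegree_C, zero_add]
        exact hprod.trans (le_totalDegree hα)

theorem totalDegree_X_mul_of_ne_zero {K σ : Type*} [CommSemiring K] [NoZeroDivisors K]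
    [Nontrivial K] {p : MvPolynomial σ K} (hp : p ≠ 0) (i : σ) :
    (X i * p).totalDegree = p.totalDegree + 1 := by
  rw [totalDegree_mul_of_isDomain (X_ne_zero i) hp, totalDegree_X, add_comm]

section AffineSubst

variable {R : Type*} [CommRing R] {k m n : Type*}

noncomputable def affineSubst [Fintype n] (A : Matrix m n R) (c : m → R) :
    MvPolynomial m R →ₐ[R] MvPolynomial n R :=
  bind₁ fun i => C (c i) + ∑ j, C (A i j) * X j

theorem affineSubst_X [Fintype n] (A : Matrix m n R) (c : m → R) (i : m) :
    affineSubst A c (X i) = C (c i) + ∑ j, C (A i j) * X j :=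
  bind₁_X_right _ _

theorem totalDegree_affineSubst_le [Fintype n] (A : Matrix m n R) (c : m → R)
    (P : MvPolynomial m R) : (affineSubst A c P).totalDegree ≤ P.totalDegree := by
  refine totalDegree_aeval_le (fun i => ?_) P
  refine (totalDegree_add _ _).trans (max_le ((totalDegree_C _).trans_le zero_le_one) ?_)
  refine totalDegree_finsetSum_le fun j _ => (totalDegree_mul _ _).trans ?_
  rw [totalDegree_C, zero_add, X]
  exact (totalDegree_monomial_le _ _).trans (by simp)

theorem affineSubst_comp_affineSubst [Fintype m] [Fintype n] (A : Matrix m n R) (c : m → R)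
    (B : Matrix k m R) (c' : k → R) :
    (affineSubst A c).comp (affineSubst B c') = affineSubst (B * A) (c' + B *ᵥ c) := by
  refine algHom_ext fun i => ?_
  simp only [AlgHom.comp_apply, affineSubst_X, map_add, map_sum, map_mul, algHom_C,
    algebraMap_eq, Matrix.mul_apply, Matrix.mulVec, dotProduct, Pi.add_apply]
  simp only [mul_add, Finset.sum_add_distrib, Finset.mul_sum, Finset.sum_mul, mul_assoc,
    add_assoc]
  rw [Finset.sum_comm (f := fun x j => C (B i x) * (C (A x j) * X j))]

theorem affineSubst_one_zero [Fintype n] [DecidableEq n] :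
    affineSubst (1 : Matrix n n R) 0 = AlgHom.id R _ := by
  refine algHom_ext fun i => ?_
  simp [affineSubst_X, Matrix.one_apply]

theorem affineSubst_inv_affineSubst [Fintype n] [DecidableEq n] {A : Matrix n n R}
    (hA : IsUnit A.det) (c : n → R) (P : MvPolynomial n R) :
    affineSubst A⁻¹ (-(A⁻¹ *ᵥ c)) (affineSubst A c P) = P := by
  rw [← AlgHom.comp_apply, affineSubst_comp_affineSubst, mul_nonsing_inv _ hA, mulVec_neg,
    mulVec_mulVec, mul_nonsing_inv _ hA, one_mulVec, add_neg_cancel, affineSubst_one_zero,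
    AlgHom.id_apply]

theorem totalDegree_affineSubst [Fintype n] [DecidableEq n] {A : Matrix n n R}
    (hA : IsUnit A.det) (c : n → R) (P : MvPolynomial n R) :
    (affineSubst A c P).totalDegree = P.totalDegree := by
  refine (totalDegree_affineSubst_le A c P).antisymm ?_
  calc P.totalDegree = (affineSubst A⁻¹ _ (affineSubst A c P)).totalDegree := by
        rw [affineSubst_inv_affineSubst hA]
    _ ≤ (affineSubst A c P).totalDegree := totalDegree_affineSubst_le _ _ _

end AffineSubst

theorem Matrix.exists_isUnit_det_submatrix_succ {K : Type*} [Field K] {m : ℕ}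
    (M : Matrix (Fin (m + 1)) (Fin m) K) (hM : Function.Injective M.mulVec) :
    ∃ A : Matrix (Fin (m + 1)) (Fin (m + 1)) K, IsUnit A.det ∧ A.submatrix id Fin.succ = M := by
  have hspan : Submodule.span K (Set.range M.col) ≠ ⊤ := by
    intro h
    have := finrank_range_le_card (R := K) M.col
    rw [Set.finrank, h, finrank_top, Module.finrank_fin_fun] at this
    simp at this
  obtain ⟨v, -, hv⟩ := SetLike.exists_of_lt hspan.lt_top
  let A : Matrix (Fin (m + 1)) (Fin (m + 1)) K := (Matrix.of (Fin.cons v M.col))ᵀ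
  have hA : LinearIndependent K A.col :=
    linearIndependent_finCons.2 ⟨Matrix.mulVec_injective_iff.1 hM, hv⟩
  exact ⟨A, (Matrix.isUnit_iff_isUnit_det A).1 (linearIndependent_cols_iff_isUnit.1 hA), rfl⟩

section Hyperplane

variable {R : Type*} [CommRing R] {m : ℕ}

noncomputable def restrictFirstZero :
    MvPolynomial (Fin (m + 1)) R →ₐ[R] MvPolynomial (Fin m) R :=
  aeval (Fin.cases 0 X)

theorem restrictFirstZero_rename_succ (P : MvPolynomial (Fin m) R) :
    restrictFirstZero (rename Fin.succ P) = P := by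
  have h : (restrictFirstZero (R := R) (m := m)).comp (rename Fin.succ) = AlgHom.id R _ :=
    algHom_ext fun i => by simp [restrictFirstZero]
  exact AlgHom.congr_fun h P

theorem totalDegree_restrictFirstZero_le (P : MvPolynomial (Fin (m + 1)) R) :
    (restrictFirstZero P).totalDegree ≤ P.totalDegree := by
  refine totalDegree_aeval_le (fun i => ?_) P
  cases i using Fin.cases with
  | zero => simp
  | succ j => exact (totalDegree_monomial_le _ _).trans (by simp)

theorem totalDegree_rename_succ (P : MvPolynomial (Fin m) R) :
    (rename Fin.succ P).totalDegree = P.totalDegree := by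
  refine (totalDegree_rename_le _ P).antisymm ?_
  conv_lhs => rw [← restrictFirstZero_rename_succ P]
  exact totalDegree_restrictFirstZero_le _

theorem X_zero_dvd_sub_rename_restrictFirstZero (P : MvPolynomial (Fin (m + 1)) R) :
    X 0 ∣ P - rename Fin.succ (restrictFirstZero P) := by
  -- Modulo `X 0`, substituting `0` for `X 0` changes nothing.
  let π := Ideal.Quotient.mkₐ R (Ideal.span {(X 0 : MvPolynomial (Fin (m + 1)) R)})
  have h : π.comp ((rename Fin.succ).comp restrictFirstZero) = π := by
    refine algHom_ext fun i => ?_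
    cases i using Fin.cases <;> simp [π, restrictFirstZero]
  rw [← Ideal.mem_span_singleton, ← Ideal.Quotient.mk_eq_mk_iff_sub_mem]
  exact (AlgHom.congr_fun h P).symm

theorem restrictFirstZero_affineSubst (A : Matrix (Fin (m + 1)) (Fin (m + 1)) R)
    (c : Fin (m + 1) → R) (P : MvPolynomial (Fin (m + 1)) R) :
    restrictFirstZero (affineSubst A c P) = affineSubst (A.submatrix id Fin.succ) c P := by
  rw [← AlgHom.comp_apply]
  congr 1
  refine algHom_ext fun i => ?_
  simp [restrictFirstZero, affineSubst_X, Fin.sum_univ_succ]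

end Hyperplane

section StrongDecomp

variable {q n : ℕ} {d r s : ℕ} {P P' : MvPolynomial (Fin n) (ZMod q)}

theorem hasStrongDecomp_zero_of_totalDegree_le (hP : P.totalDegree ≤ d - 1) :
    HasStrongDecomp d 0 P :=
  ⟨Fin.elim0, Fin.elim0, P, (·.elim0), (·.elim0), (·.elim0), hP, by simp⟩

theorem HasStrongDecomp.add (h : HasStrongDecomp d r P) (h' : HasStrongDecomp d s P') :
    HasStrongDecomp d (r + s) (P + P') := by
  obtain ⟨G, H, Q, hG, hH, hGH, hQ, rfl⟩ := h
  obtain ⟨G', H', Q', hG', hH', hGH', hQ', rfl⟩ := h'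
  refine ⟨Fin.append G G', Fin.append H H', Q + Q', Fin.addCases ?_ ?_, Fin.addCases ?_ ?_,
    Fin.addCases ?_ ?_, (totalDegree_add _ _).trans (max_le hQ hQ'), ?_⟩
  all_goals simp_all [Fin.sum_univ_add]
  ring

theorem HasStrongDecomp.map {m : ℕ}
    (φ : MvPolynomial (Fin n) (ZMod q) →ₐ[ZMod q] MvPolynomial (Fin m) (ZMod q))
    (hφ : ∀ P, (φ P).totalDegree = P.totalDegree) (h : HasStrongDecomp d r P) :
    HasStrongDecomp d r (φ P) := by
  obtain ⟨G, H, Q, hG, hH, hGH, hQ, rfl⟩ := h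
  exact ⟨fun i => φ (G i), fun i => φ (H i), φ Q, by simpa [hφ] using hG,
    by simpa [hφ] using hH, by simpa [hφ] using hGH, by rwa [hφ], by simp⟩

theorem exists_hasStrongDecomp_X_mul [Fact q.Prime] (hd : 2 ≤ d) (i : Fin n)
    {R : MvPolynomial (Fin n) (ZMod q)} (hR : R.totalDegree ≤ d - 1) :
    ∃ s ≤ 1, HasStrongDecomp d s (X i * R) := by
  rcases Nat.eq_zero_or_pos R.totalDegree with hR0 | hRpos
  · refine ⟨0, zero_le_one, hasStrongDecomp_zero_of_totalDegree_le ?_⟩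
    refine (totalDegree_mul _ _).trans ?_
    rw [totalDegree_X, hR0]
    omega
  · refine ⟨1, le_rfl, ![X i], ![R], 0, fun _ => ?_, fun _ => by simpa using hRpos,
      fun _ => ?_, by simp, by simp⟩
    · simp
    · simp only [Matrix.cons_val_fin_one, totalDegree_X]
      omega

theorem exists_hasStrongDecomp_monomial [Fact q.Prime] (hd : 2 ≤ d) {α : Fin n →₀ ℕ}
    (hα : α.degree ≤ d) (a : ZMod q) : ∃ r, HasStrongDecomp d r (monomial α a) := by
  rcases eq_or_ne α 0 with rfl | hα0
  · exact ⟨0, hasStrongDecomp_zero_of_totalDegree_le (by simp)⟩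
  obtain ⟨j, hj⟩ := Finsupp.ne_iff.1 hα0
  have hsplit : Finsupp.single j 1 + (α - Finsupp.single j 1) = α :=
    add_tsub_cancel_of_le (Finsupp.single_le_iff.2 (Nat.one_le_iff_ne_zero.2 hj))
  have hdeg : (α - Finsupp.single j 1).degree ≤ d - 1 := by
    have := congrArg Finsupp.degree hsplit
    rw [map_add, Finsupp.degree_single] at this
    omega
  obtain ⟨s, -, hs⟩ := exists_hasStrongDecomp_X_mul hd j
    ((totalDegree_monomial_le _ a).trans hdeg)
  refine ⟨s, ?_⟩
  rwa [X, monomial_mul, one_mul, hsplit] at hs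

theorem exists_hasStrongDecomp [Fact q.Prime] (hd : 2 ≤ d) (hP : P.totalDegree ≤ d) :
    ∃ r, HasStrongDecomp d r P := by
  rw [P.as_sum]
  refine Finset.sum_induction _ (fun Q => ∃ r, HasStrongDecomp d r Q)
    (fun _ _ ⟨r, hr⟩ ⟨s, hs⟩ => ⟨r + s, hr.add hs⟩)
    ⟨0, hasStrongDecomp_zero_of_totalDegree_le (by simp)⟩ fun α hα =>
      exists_hasStrongDecomp_monomial hd ((le_totalDegree hα).trans hP) _

theorem strongRankD_le (h : HasStrongDecomp d r P) : strongRankD d P ≤ r :=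
  Nat.sInf_le h

theorem hasStrongDecomp_strongRankD (h : ∃ r, HasStrongDecomp d r P) :
    HasStrongDecomp d (strongRankD d P) P :=
  Nat.sInf_mem h

theorem strongRankD_eq_zero_of_le_one (hd : d ≤ 1) (P : MvPolynomial (Fin n) (ZMod q)) :
    strongRankD d P = 0 := by
  have hr : ∀ r, HasStrongDecomp d r P → r = 0 := by
    rintro r ⟨G, H, Q, hG, hH, hGH, -, -⟩
    by_contra hr
    have := hGH ⟨0, Nat.pos_of_ne_zero hr⟩
    have := hG ⟨0, Nat.pos_of_ne_zero hr⟩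
    have := hH ⟨0, Nat.pos_of_ne_zero hr⟩
    omega
  rw [strongRankD, Nat.sInf_eq_zero]
  by_cases h : ∃ r, HasStrongDecomp d r P
  · obtain ⟨r, hr'⟩ := h
    exact .inl (hr r hr' ▸ hr')
  · exact .inr (Set.eq_empty_of_forall_notMem fun r hr' => h ⟨r, hr'⟩)

theorem strongRankD_affineSubst {A : Matrix (Fin n) (Fin n) (ZMod q)} (hA : IsUnit A.det)
    (c : Fin n → ZMod q) (P : MvPolynomial (Fin n) (ZMod q)) :
    strongRankD d (affineSubst A c P) = strongRankD d P := by
  have hA' : IsUnit A⁻¹.det := isUnit_nonsing_inv_det A hA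
  unfold strongRankD
  congr 1
  ext r
  simp only [Set.mem_ofPred_eq]
  refine ⟨fun h => ?_, fun h => h.map _ (totalDegree_affineSubst hA c)⟩
  simpa only [affineSubst_inv_affineSubst hA] using
    h.map _ (totalDegree_affineSubst hA' (-(A⁻¹ *ᵥ c)))

theorem strongRankD_le_strongRankD_restrictFirstZero_add_one [Fact q.Prime] {m : ℕ}
    {f : MvPolynomial (Fin (m + 1)) (ZMod q)} (hf : f.totalDegree ≤ d) :
    strongRankD d f ≤ strongRankD d (restrictFirstZero f) + 1 := by
  rcases le_or_gt d 1 with hd | hd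
  · simp [strongRankD_eq_zero_of_le_one hd]
  set g := restrictFirstZero f
  -- `strongRankD` is an `sInf`, which is `0` when `g` has no decomposition at all.
  have hg : HasStrongDecomp d (strongRankD d g) g := hasStrongDecomp_strongRankD
    (exists_hasStrongDecomp hd ((totalDegree_restrictFirstZero_le f).trans hf))
  obtain ⟨R, hR⟩ := X_zero_dvd_sub_rename_restrictFirstZero f
  have hXR : (X 0 * R).totalDegree ≤ d := by
    rw [← hR]
    refine (totalDegree_sub _ _).trans (max_le hf ?_)
    rw [totalDegree_rename_succ]
    exact (totalDegree_restrictFirstZero_le f).trans hf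
  have hRdeg : R.totalDegree ≤ d - 1 := by
    rcases eq_or_ne R 0 with rfl | hR0
    · simp
    · rw [totalDegree_X_mul_of_ne_zero hR0] at hXR
      omega
  obtain ⟨s, hs1, hs⟩ := exists_hasStrongDecomp_X_mul hd 0 hRdeg
  have hdecomp := (hg.map (rename Fin.succ) totalDegree_rename_succ).add hs
  rw [← hR, add_sub_cancel] at hdecomp
  exact (strongRankD_le hdecomp).trans (by omega)

end StrongDecomp

/-- If `H` is a hyperplane (affine subspace of dimension `n-1`), parametrized by an
injective affine map `u ↦ c + M u` from `F^{n-1}`, then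
`strong-rank(f) ≤ strong-rank(f|_H) + 1`. -/
theorem stmt6 {q n : ℕ} [Fact (Nat.Prime q)] (hn : 1 ≤ n) (d : ℕ)
    (f : MvPolynomial (Fin n) (ZMod q)) (hdeg : f.totalDegree ≤ d)
    (M : Matrix (Fin n) (Fin (n - 1)) (ZMod q)) (c : Fin n → ZMod q)
    (hinj : Function.Injective fun (u : Fin (n - 1) → ZMod q) =>
      fun i : Fin n => c i + ∑ j, M i j * u j) :
    strongRankD d f ≤
      strongRankD d (MvPolynomial.bind₁
        (fun i => MvPolynomial.C (c i) + ∑ j, MvPolynomial.C (M i j) * MvPolynomial.X j) f)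
      + 1 := by
  obtain ⟨m, rfl⟩ : ∃ m, n = m + 1 := ⟨n - 1, by omega⟩
  have hM : Function.Injective M.mulVec := fun u v huv => by
    refine hinj (funext fun i => ?_)
    simpa [Matrix.mulVec, dotProduct] using congrFun huv i
  obtain ⟨A, hA, rfl⟩ := M.exists_isUnit_det_submatrix_succ hM
  calc strongRankD d f = strongRankD d (affineSubst A c f) := (strongRankD_affineSubst hA c f).symm
    _ ≤ strongRankD d (restrictFirstZero (affineSubst A c f)) + 1 :=
        strongRankD_le_strongRankD_restrictFirstZero_add_one (by rwa [totalDegree_affineSubst hA])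
    _ = _ := by rw [restrictFirstZero_affineSubst]; rfl
end

section
/- If every degree-5 polynomial f: F^n → F with bias at least δ is constant on some affine subspace of dimension c(δ)·n, then any degree-5 polynomial affine disperser for dimension k is also an affine extractor for dimension O(k). -/
/-!
Restrict `f` to the coset `V + h` through a basis of `V`: this gives a degree-5 polynomial in
`dim V` variables whose bias is the bias of `λ f` on the coset. If that bias exceeded `ε`, the
hypothesis would make the restriction constant on a subspace of dimension `c · dim V ≥ k`,
whose image in `V + h` is a `k`-dimensional affine subspace on which `f` is constant.
-/

open Finset

/-- The bias of a function `f : F^n → F`, `F = Z/q`. -/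
noncomputable def bias {q n : ℕ} [NeZero q] (f : (Fin n → ZMod q) → ZMod q) : ℝ :=
  ‖∑ x : Fin n → ZMod q,
    Complex.exp (2 * Real.pi * Complex.I * ((f x).val : ℂ) / (q : ℂ))‖ / (q : ℝ) ^ n

open scoped Classical in
/-- The bias of `g` restricted to the coset `V + h`. -/
noncomputable def cosetBias {q n : ℕ} [NeZero q] (V : Submodule (ZMod q) (Fin n → ZMod q))
    (h : Fin n → ZMod q) (g : (Fin n → ZMod q) → ZMod q) : ℝ :=
  ‖∑ v : V,
    Complex.exp (2 * Real.pi * Complex.I * ((g ((v : Fin n → ZMod q) + h)).val : ℂ) / (q : ℂ))‖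
    / (Fintype.card V : ℝ)

open MvPolynomial

namespace MvPolynomial

variable {R : Type*} [CommSemiring R] {σ τ : Type*}

theorem totalDegree_bind₁_le {p : σ → MvPolynomial τ R} (hp : ∀ i, (p i).totalDegree ≤ 1)
    (f : MvPolynomial σ R) : (bind₁ p f).totalDegree ≤ f.totalDegree := by
  conv_lhs => rw [f.as_sum]
  rw [map_sum]
  refine (totalDegree_finsetSum _ _).trans (Finset.sup_le fun d hd => ?_)
  rw [bind₁_monomial]
  calc (C (f.coeff d) * ∏ i ∈ d.support, p i ^ d i).totalDegree
      ≤ (∏ i ∈ d.support, p i ^ d i).totalDegree := by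
        rw [C_mul']
        exact totalDegree_smul_le _ _
    _ ≤ ∑ i ∈ d.support, (p i ^ d i).totalDegree := totalDegree_finsetProd _ _
    _ ≤ ∑ i ∈ d.support, d i := sum_le_sum fun i _ => (totalDegree_pow _ _).trans <| by
        simpa using Nat.mul_le_mul_left (d i) (hp i)
    _ ≤ f.totalDegree := le_totalDegree hd

variable [Fintype τ] [DecidableEq τ]

noncomputable def affineSubst (L : (τ → R) →ₗ[R] (σ → R)) (h : σ → R) :
    σ → MvPolynomial τ R :=
  fun i => ∑ j, C (L (Pi.single j 1) i) * X j + C (h i)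

theorem totalDegree_affineSubst_le (L : (τ → R) →ₗ[R] (σ → R)) (h : σ → R) (i : σ) :
    (affineSubst L h i).totalDegree ≤ 1 := by
  refine (totalDegree_add _ _).trans (max_le ?_ (by simp))
  refine (totalDegree_finsetSum _ _).trans (Finset.sup_le fun j _ => ?_)
  rw [C_mul_X_eq_monomial]
  exact (totalDegree_monomial_le _ _).trans (by simp)

theorem eval_affineSubst (L : (τ → R) →ₗ[R] (σ → R)) (h : σ → R) (x : τ → R) (i : σ) :
    eval x (affineSubst L h i) = (L x + h) i := by
  have hx : L x = ∑ j, x j • L (Pi.single j 1) := by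
    conv_lhs => rw [← (Pi.basisFun R τ).sum_repr x]
    simp [map_sum]
  simp [affineSubst, hx, Finset.sum_apply, mul_comm]

theorem eval_bind₁_affineSubst (L : (τ → R) →ₗ[R] (σ → R)) (h : σ → R)
    (f : MvPolynomial σ R) (x : τ → R) :
    eval x (bind₁ (affineSubst L h) f) = eval (L x + h) f := by
  change aeval x (bind₁ _ f) = aeval (L x + h) f
  rw [aeval_bind₁]
  exact congrArg (aeval · f) (_root_.funext (eval_affineSubst L h x))

end MvPolynomial

open scoped Classical in
theorem cosetBias_eq_bias {q n m : ℕ} [NeZero q] {V : Submodule (ZMod q) (Fin n → ZMod q)}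
    (e : (Fin m → ZMod q) ≃ₗ[ZMod q] V) (h : Fin n → ZMod q)
    (g : (Fin n → ZMod q) → ZMod q) :
    cosetBias V h g = bias (fun x => g ((e x : Fin n → ZMod q) + h)) := by
  have hcard : (Fintype.card V : ℝ) = (q : ℝ) ^ m := by
    rw [← Fintype.card_congr e.toEquiv]
    simp
  rw [cosetBias, bias, hcard, ← Equiv.sum_comp e.toEquiv]
  rfl

theorem Submodule.forall_mem_map_add_eq {R M N β : Type*} [Semiring R] [AddCommMonoid M]
    [Module R M] [AddCommMonoid N] [Module R N] (L : M →ₗ[R] N) (W : Submodule R M)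
    (h' : M) (h : N) {φ : N → β} {b : β} (hW : ∀ w ∈ W, φ (L (w + h') + h) = b) :
    ∀ v ∈ W.map L, φ (v + (L h' + h)) = b := by
  rintro _ ⟨w, hw, rfl⟩
  simpa [add_assoc] using hW w hw

/-- If every degree-5 polynomial with bias at least `δ` is constant on an affine
subspace of dimension `c(δ)·n`, then every degree-5 affine disperser for dimension `k`
is an affine extractor for dimension `O(k)`: all nontrivial characters of `f` have
bias at most `ε` on every affine subspace of dimension `≥ C·k`. -/
theorem stmt13 {q : ℕ} [Fact (Nat.Prime q)] (ε : ℝ) (hε : 0 < ε)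
    (Hyp : ∀ δ : ℝ, 0 < δ → ∃ c : ℝ, 0 < c ∧
      ∀ (n : ℕ) (f : MvPolynomial (Fin n) (ZMod q)),
        f.totalDegree ≤ 5 →
        δ ≤ bias (fun x => MvPolynomial.eval x f) →
        ∃ (V : Submodule (ZMod q) (Fin n → ZMod q)) (h : Fin n → ZMod q) (cst : ZMod q),
          c * n ≤ (Module.finrank (ZMod q) V : ℝ) ∧
          ∀ v ∈ V, MvPolynomial.eval (v + h) f = cst) :
    ∃ C : ℝ, 0 < C ∧
      ∀ (n k : ℕ) (f : MvPolynomial (Fin n) (ZMod q)),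
        f.totalDegree ≤ 5 →
        -- `f` is an affine disperser for dimension `k`
        (∀ (V : Submodule (ZMod q) (Fin n → ZMod q)) (h : Fin n → ZMod q),
          (k : ℝ) ≤ (Module.finrank (ZMod q) V : ℝ) →
          ¬ ∃ cst : ZMod q, ∀ v ∈ V, MvPolynomial.eval (v + h) f = cst) →
        -- then `f` is an affine extractor for dimension `C·k` with error `ε`
        ∀ (V : Submodule (ZMod q) (Fin n → ZMod q)) (h : Fin n → ZMod q),
          C * (k : ℝ) ≤ (Module.finrank (ZMod q) V : ℝ) →
          ∀ lam : ZMod q, lam ≠ 0 →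
            cosetBias V h (fun x => lam * MvPolynomial.eval x f) ≤ ε := by
  obtain ⟨c, hc, Hc⟩ := Hyp ε hε
  refine ⟨c⁻¹, inv_pos.mpr hc, fun n k f hdeg hdisp V h hdim lam hlam => ?_⟩
  by_contra! hbig
  let e := (Module.finBasis (ZMod q) V).equivFun.symm
  let L := V.subtype ∘ₗ e.toLinearMap
  let g := C lam * bind₁ (affineSubst L h) f
  have hg : ∀ x, eval x g = lam * eval (L x + h) f := fun x => by
    simp [g, eval_bind₁_affineSubst]
  have hgdeg : g.totalDegree ≤ 5 := (totalDegree_mul _ _).trans <| by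
    simpa using (totalDegree_bind₁_le (totalDegree_affineSubst_le L h) f).trans hdeg
  have hgbias : ε ≤ bias (fun x => eval x g) := by
    rw [cosetBias_eq_bias e] at hbig
    simpa [hg, L] using hbig.le
  obtain ⟨W, h', cst, hWdim, hWconst⟩ := Hc _ g hgdeg hgbias
  refine hdisp (W.map L) (L h' + h) ?_ ⟨lam⁻¹ * cst, ?_⟩
  · have hinj : Function.Injective L := V.injective_subtype.comp e.injective
    rw [← (Submodule.equivMapOfInjective L hinj W).finrank_eq]
    exact ((inv_mul_le_iff₀ hc).mp hdim).trans hWdim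
  · refine Submodule.forall_mem_map_add_eq L W h' h (φ := fun y => eval y f) fun w hw => ?_
    rw [← hWconst w hw, hg, inv_mul_cancel_left₀ hlam]
end
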